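/- Let 𝓕 be the exponential distance matrix of K_{s,t} with q ≠ ±1 and q²(s−1)(t−1) ≠ 1. Then the sum of all cofactors of 𝓕, i.e. det(𝓕) times the sum of all entries of 𝓕⁻¹, equals (1−q²)^{s+t−1}·( 2q(q−1)st/(1−q²) + s + t ). -/

import Mathlib

/-!
By the matrix determinant lemma the cofactor sum of an invertible `A` is `det (A + J) - det A`,
`J` the all-ones matrix. For `K_{s,t}` both `𝓕` and `𝓕 + J` are `(1 - q²) I` plus a matrix that is
constant on each of the four blocks. That is a rank-two perturbation `U V` with `U` of size
`(s + t) × 2`, and the Weinstein–Aronszajn identity `a² det (a I + U V) = a^(s+t) det (a I + V U)`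
reduces both determinants to `2 × 2` ones.
-/

open Matrix

/-- Intended for connected `G`: `SimpleGraph.dist` is `0` between unreachable vertices. -/
noncomputable def expDistMatrix {V : Type*} (G : SimpleGraph V) (q : ℝ) : Matrix V V ℝ :=
  Matrix.of fun u v => q ^ (G.dist u v)

namespace SimpleGraph

variable {V : Type*} {G : SimpleGraph V} {u v w : V}

theorem dist_eq_two_of_adj_adj (hne : u ≠ v) (hnadj : ¬G.Adj u v) (huw : G.Adj u w)
    (hwv : G.Adj w v) : G.dist u v = 2 := by
  have h : G.edist u v = 2 := edist_eq_two_iff.mpr ⟨hne, hnadj, w, huw, hwv.symm⟩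
  simp [dist, h]

variable {W : Type*}

theorem completeBipartiteGraph_dist_inl_inr (v : V) (w : W) :
    (completeBipartiteGraph V W).dist (.inl v) (.inr w) = 1 :=
  dist_eq_one_iff_adj.mpr (by simp)

theorem completeBipartiteGraph_dist_inr_inl (w : W) (v : V) :
    (completeBipartiteGraph V W).dist (.inr w) (.inl v) = 1 :=
  dist_eq_one_iff_adj.mpr (by simp)

theorem completeBipartiteGraph_dist_inl_inl [Nonempty W] {v v' : V} (h : v ≠ v') :
    (completeBipartiteGraph V W).dist (.inl v) (.inl v') = 2 :=
  dist_eq_two_of_adj_adj (by simpa) (by simp) (w := .inr (Classical.arbitrary W)) (by simp)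
    (by simp)

theorem completeBipartiteGraph_dist_inr_inr [Nonempty V] {w w' : W} (h : w ≠ w') :
    (completeBipartiteGraph V W).dist (.inr w) (.inr w') = 2 :=
  dist_eq_two_of_adj_adj (by simpa) (by simp) (w := .inl (Classical.arbitrary V)) (by simp)
    (by simp)

end SimpleGraph

open SimpleGraph in
theorem expDistMatrix_completeBipartiteGraph {V W : Type*} [DecidableEq V] [DecidableEq W]
    [Fintype V] [Fintype W] [Nonempty V] [Nonempty W] (q : ℝ) :
    expDistMatrix (completeBipartiteGraph V W) q
      = scalar (V ⊕ W) (1 - q ^ 2) + fromBlocks (of fun _ _ => q ^ 2) (of fun _ _ => q)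
          (of fun _ _ => q) (of fun _ _ => q ^ 2) := by
  ext (i | i) (j | j)
  · obtain rfl | h := eq_or_ne i j <;> simp [expDistMatrix, completeBipartiteGraph_dist_inl_inl, *]
  · simp [expDistMatrix, completeBipartiteGraph_dist_inl_inr]
  · simp [expDistMatrix, completeBipartiteGraph_dist_inr_inl]
  · obtain rfl | h := eq_or_ne i j <;> simp [expDistMatrix, completeBipartiteGraph_dist_inr_inr, *]

namespace Matrix

variable {R : Type*} [CommRing R] {m n : Type*} [Fintype m] [Fintype n] [DecidableEq m]
  [DecidableEq n]

theorem det_scalar_add_mul_comm (a : R) (U : Matrix m n R) (V : Matrix n m R) :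
    a ^ Fintype.card n * (scalar m a + U * V).det
      = a ^ Fintype.card m * (scalar n a + V * U).det := by
  simpa [eval_charpoly, Matrix.neg_mul, Matrix.mul_neg]
    using congrArg (Polynomial.eval a) (charpoly_mul_comm' (-U) V)

theorem det_mul_sum_inv_eq_det_add_ofConst_sub_det {K : Type*} [Field K] (A : Matrix n n K)
    (hA : IsUnit A.det) :
    A.det * ∑ i, ∑ j, A⁻¹ i j = (A + of fun _ _ => 1).det - A.det := by
  have hJ : (of fun _ _ => 1 : Matrix n n K)
      = replicateCol Unit (fun _ : n => (1 : K)) * replicateRow Unit (fun _ : n => (1 : K)) := by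
    ext; simp [replicateCol, replicateRow, Matrix.mul_apply]
  rw [hJ, det_add_replicateCol_mul_replicateRow hA, det_unique (n := Unit)]
  simp only [replicateRow, replicateCol, PUnit.default_eq_unit, add_apply, one_apply_eq, mul_apply,
    of_apply, one_mul, mul_one, Finset.sum_comm (γ := n)]
  ring

theorem det_scalar_add_fromBlocks_of_const (a b c c' d : R) :
    a ^ 2 * (scalar (m ⊕ n) a + fromBlocks (of fun _ _ => b) (of fun _ _ => c)
        (of fun _ _ => c') (of fun _ _ => d)).det
      = a ^ (Fintype.card m + Fintype.card n)
          * ((a + Fintype.card m * b) * (a + Fintype.card n * d)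
              - Fintype.card m * Fintype.card n * c * c') := by
  let U : Matrix (m ⊕ n) (Fin 2) R := of (Sum.elim (fun _ => ![b, c]) (fun _ => ![c', d]))
  let V : Matrix (Fin 2) (m ⊕ n) R := of ![Sum.elim 1 0, Sum.elim 0 1]
  have hUV : fromBlocks (of fun _ _ => b) (of fun _ _ => c) (of fun _ _ => c')
      (of fun _ _ => d) = U * V := by
    ext (i | i) (j | j) <;> simp [U, V, Matrix.mul_apply, Fin.sum_univ_two]
  have hVU : V * U = !![Fintype.card m * b, Fintype.card m * c;
      Fintype.card n * c', Fintype.card n * d] := by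
    ext k l
    fin_cases k <;> fin_cases l <;> simp [U, V, Matrix.mul_apply, Fintype.sum_sum_type]
  have h := det_scalar_add_mul_comm a U V
  rw [Fintype.card_fin, Fintype.card_sum] at h
  rw [hUV, h, hVU, det_fin_two]
  simp only [scalar_apply, add_apply, diagonal_apply_eq, diagonal_apply_ne, of_apply, cons_val',
    cons_val_zero, cons_val_fin_one, cons_val_one, ne_eq, zero_ne_one, one_ne_zero,
    not_false_eq_true, zero_add]
  ring

end Matrix

theorem cofSum_expDistMatrix_completeBipartite_general (s t : ℕ) (hs : 0 < s) (ht : 0 < t)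
    (q : ℝ) (hq1 : q ≠ 1) (hq1' : q ≠ -1)
    (hq2 : q ^ 2 * ((s : ℝ) - 1) * ((t : ℝ) - 1) ≠ 1) :
    (expDistMatrix (completeBipartiteGraph (Fin s) (Fin t)) q).det
        * ∑ i, ∑ j, (expDistMatrix (completeBipartiteGraph (Fin s) (Fin t)) q)⁻¹ i j
      = (1 - q ^ 2) ^ (s + t - 1)
          * (2 * q * (q - 1) * s * t / (1 - q ^ 2) + s + t) := by
  have : Nonempty (Fin s) := Fin.pos_iff_nonempty.mp hs
  have : Nonempty (Fin t) := Fin.pos_iff_nonempty.mp ht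
  have hM := expDistMatrix_completeBipartiteGraph (V := Fin s) (W := Fin t) q
  set M := expDistMatrix (completeBipartiteGraph (Fin s) (Fin t)) q
  have hα : 1 - q ^ 2 ≠ 0 := by
    rw [sub_ne_zero, ne_comm, Ne, sq_eq_one_iff]
    exact not_or.mpr ⟨hq1, hq1'⟩
  have hMJ : M + of (fun _ _ => 1) = scalar _ (1 - q ^ 2) + fromBlocks (of fun _ _ => q ^ 2 + 1)
      (of fun _ _ => q + 1) (of fun _ _ => q + 1) (of fun _ _ => q ^ 2 + 1) := by
    rw [hM, add_assoc]
    congr 1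
    ext (i | i) (j | j) <;> simp
  have hdetM := det_scalar_add_fromBlocks_of_const (m := Fin s) (n := Fin t)
    (1 - q ^ 2) (q ^ 2) q q (q ^ 2)
  have hdetMJ := det_scalar_add_fromBlocks_of_const (m := Fin s) (n := Fin t)
    (1 - q ^ 2) (q ^ 2 + 1) (q + 1) (q + 1) (q ^ 2 + 1)
  simp only [← hM, ← hMJ, Fintype.card_fin] at hdetM hdetMJ
  have hdet : M.det ≠ 0 := by
    intro h0
    rw [h0, mul_zero, eq_comm] at hdetM
    have hschur : (1 - q ^ 2 + s * q ^ 2) * (1 - q ^ 2 + t * q ^ 2) - s * t * q * q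
        = (1 - q ^ 2) * (1 - q ^ 2 * ((s : ℝ) - 1) * ((t : ℝ) - 1)) := by ring
    rw [hschur] at hdetM
    exact mul_ne_zero (pow_ne_zero _ hα) (mul_ne_zero hα (sub_ne_zero.mpr hq2.symm)) hdetM
  rw [det_mul_sum_inv_eq_det_add_ofConst_sub_det _ hdet.isUnit]
  refine mul_left_cancel₀ (pow_ne_zero 2 hα) ?_
  obtain ⟨n, hn⟩ : ∃ n, s + t = n + 2 := ⟨s + t - 2, by omega⟩
  rw [mul_sub, hdetMJ, hdetM, hn, show n + 2 - 1 = n + 1 by omega]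
  field_simp
  ring

/-- Cofactor sum of the exponential distance matrix of `K_{s,t}`:
`det(𝓕) · Σ_{i,j} (𝓕⁻¹)_{ij} = (1-q²)^(s+t-1)·(2q(q-1)st/(1-q²) + s + t)`. -/
theorem cofSum_expDistMatrix_completeBipartite (s t : ℕ) (hs : 0 < s) (ht : 0 < t)
    (q : ℝ) (hq0 : q ≠ 0) (hq1 : q ≠ 1) (hq1' : q ≠ -1)
    (hq2 : q ^ 2 * ((s : ℝ) - 1) * ((t : ℝ) - 1) ≠ 1) :
    (expDistMatrix (completeBipartiteGraph (Fin s) (Fin t)) q).det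
        * ∑ i, ∑ j, (expDistMatrix (completeBipartiteGraph (Fin s) (Fin t)) q)⁻¹ i j
      = (1 - q ^ 2) ^ (s + t - 1)
          * (2 * q * (q - 1) * s * t / (1 - q ^ 2) + s + t) :=
  cofSum_expDistMatrix_completeBipartite_general s t hs ht q hq1 hq1' hq2
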